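/- arXiv:2112.04976 — 2 statements merged into one kernel-verified Lean document; each statement's English description precedes it below -/
import Mathlib

section
/- For any two starting configurations σ_0, σ'_0 there exists a coupling (σ_t, σ'_t)_{t≥0} of the Glauber dynamics started from (σ_0, σ'_0) such that for every t ≥ 0 the vector of expected block Hamming distances satisfies, componentwise, (E dist(σ_t^{(1)},σ'_t^{(1)}), …, E dist(σ_t^{(m)},σ'_t^{(m)}))^T ≤ A^t (dist(σ_0^{(1)},σ'_0^{(1)}), …, dist(σ_0^{(m)},σ'_0^{(m)}))^T, where A is the m×m matrix with A_{ii} = 1 − 1/n + β (k_{ii}/n)(p_i − 1/n) and A_{ij} = β p_i k_{ij}/n for i ≠ j. -/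
open Finset MeasureTheory Real Filter

namespace MultiIsing

/-- The real spin value attached to a Boolean spin. -/
def spin (b : Bool) : ℝ := if b then 1 else -1

/-- `r₊(s) = e^{βs}/(e^{βs}+e^{-βs})`. -/
noncomputable def rp (β s : ℝ) : ℝ :=
  Real.exp (β * s) / (Real.exp (β * s) + Real.exp (-(β * s)))

/-- `r₋(s) = e^{-βs}/(e^{βs}+e^{-βs})`. -/
noncomputable def rm (β s : ℝ) : ℝ :=
  Real.exp (-(β * s)) / (Real.exp (β * s) + Real.exp (-(β * s)))

variable {m : ℕ}

/-- `g : Fin n → Fin m` realizes the partition of `n` vertices into groups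
of sizes `n * p i`. -/
def IsPartition (n : ℕ) (p : Fin m → ℝ) (g : Fin n → Fin m) : Prop :=
  0 < n ∧ ∀ i, ((Finset.univ.filter fun v => g v = i).card : ℝ) = n * p i

/-- Standing hypotheses on the parameters of the multi-component Ising model. -/
structure Params (m : ℕ) (p : Fin m → ℝ) (k : Fin m → Fin m → ℝ) : Prop where
  hm : 0 < m
  hp : ∀ i, 0 < p i
  hpsum : ∑ i, p i = 1
  hkpos : ∀ i j, 0 < k i j
  hksymm : ∀ i j, k i j = k j i

/-- `a` is the (normalized, positive) Perron–Frobenius left eigenvector of the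
matrix `B = (p i * k i j)`; its eigenvalue is then necessarily
`∑ i j, a i * p i * k i j`. -/
structure PFvec (m : ℕ) (p : Fin m → ℝ) (k : Fin m → Fin m → ℝ) (a : Fin m → ℝ) : Prop where
  hpos : ∀ i, 0 < a i
  hsum : ∑ i, a i = 1
  heig : ∀ j, ∑ i, a i * (p i * k i j) = (∑ i, ∑ j, a i * (p i * k i j)) * a j

/-- The critical inverse temperature `β_cr = 1 / (∑ i j, a i * p i * k i j)`. -/
noncomputable def betaCr (p : Fin m → ℝ) (k : Fin m → Fin m → ℝ) (a : Fin m → ℝ) : ℝ :=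
  1 / (∑ i, ∑ j, a i * (p i * k i j))

/-- The mean field `S^v = ∑_{w ≠ v} K(v,w) σ(w)` at vertex `v`. -/
noncomputable def meanField (n : ℕ) (k : Fin m → Fin m → ℝ) (g : Fin n → Fin m)
    (σ : Fin n → Bool) (v : Fin n) : ℝ :=
  ∑ w ∈ Finset.univ.filter (fun w => w ≠ v), (k (g v) (g w) / n) * spin (σ w)

/-- One-step transition probabilities of the Glauber dynamics: a uniformly chosen
vertex is refreshed to `±1` with probabilities `r±(S^v)`. -/
noncomputable def glauber (n : ℕ) (β : ℝ) (k : Fin m → Fin m → ℝ) (g : Fin n → Fin m)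
    (σ σ' : Fin n → Bool) : ℝ :=
  (1 / n) * ∑ v,
    ((if σ' = Function.update σ v true then rp β (meanField n k g σ v) else 0)
      + (if σ' = Function.update σ v false then rm β (meanField n k g σ v) else 0))

/-- `t`-step transition probabilities of a transition kernel on a finite state space. -/
noncomputable def iter {Ω : Type*} [Fintype Ω] [DecidableEq Ω] (P : Ω → Ω → ℝ) :
    ℕ → Ω → Ω → ℝ
  | 0 => fun x y => if x = y then 1 else 0
  | (t + 1) => fun x y => ∑ z, iter P t x z * P z y

/-- The Gibbs measure `μ_n(σ) ∝ exp(β ∑_{unordered pairs v ≠ w} K(v,w) σ(v) σ(w))`. -/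
noncomputable def gibbs (n : ℕ) (β : ℝ) (k : Fin m → Fin m → ℝ) (g : Fin n → Fin m)
    (σ : Fin n → Bool) : ℝ :=
  Real.exp (β * ((1 / 2) * ∑ v, ∑ w ∈ Finset.univ.filter (fun w => w ≠ v),
      (k (g v) (g w) / n) * spin (σ v) * spin (σ w))) /
    ∑ σ' : Fin n → Bool, Real.exp (β * ((1 / 2) * ∑ v, ∑ w ∈ Finset.univ.filter (fun w => w ≠ v),
      (k (g v) (g w) / n) * spin (σ' v) * spin (σ' w)))

/-- The total-variation distance between two distributions on a finite space. -/
noncomputable def tvDist {Ω : Type*} [Fintype Ω] (μ ν : Ω → ℝ) : ℝ :=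
  (1 / 2) * ∑ x, |μ x - ν x|

/-- The worst-case total-variation distance to stationarity after `t` steps. -/
noncomputable def dn (n : ℕ) (β : ℝ) (k : Fin m → Fin m → ℝ) (g : Fin n → Fin m)
    (t : ℕ) : ℝ :=
  ⨆ σ : Fin n → Bool, tvDist (fun σ' => iter (glauber n β k g) t σ σ') (gibbs n β k g)

/-- The total-variation mixing time `t_mix = min {t : d_n(t) ≤ 1/4}`. -/
noncomputable def tmix (n : ℕ) (β : ℝ) (k : Fin m → Fin m → ℝ) (g : Fin n → Fin m) : ℕ :=
  sInf {t : ℕ | dn n β k g t ≤ 1 / 4}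

/-- The normalized block magnetization `S^{(i)}(σ) = (1/n) ∑_{v ∈ G_i} σ(v)`. -/
noncomputable def Smag (n : ℕ) (g : Fin n → Fin m) (σ : Fin n → Bool) (i : Fin m) : ℝ :=
  (1 / n) * ∑ v ∈ Finset.univ.filter (fun v => g v = i), spin (σ v)

/-- The unnormalized block magnetization `M^{(i)}(σ) = ∑_{v ∈ G_i} σ(v)`. -/
noncomputable def Mvec (n : ℕ) (g : Fin n → Fin m) (σ : Fin n → Bool) (i : Fin m) : ℝ :=
  ∑ v ∈ Finset.univ.filter (fun v => g v = i), spin (σ v)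

/-- The `i`-th block Hamming distance between two configurations. -/
noncomputable def blockDist (n : ℕ) (g : Fin n → Fin m) (σ σ' : Fin n → Bool) (i : Fin m) : ℝ :=
  (1 / 2) * ∑ v ∈ Finset.univ.filter (fun v => g v = i), |spin (σ v) - spin (σ' v)|

/-- The matrix `Q = (1 - 1/n) I + (β/n) B` where `B = (p i * k i j)`. -/
noncomputable def Qmat (n : ℕ) (β : ℝ) (p : Fin m → ℝ) (k : Fin m → Fin m → ℝ) :
    Matrix (Fin m) (Fin m) ℝ :=
  (1 - 1 / (n : ℝ)) • (1 : Matrix (Fin m) (Fin m) ℝ) +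
    (β / n) • Matrix.of (fun i j => p i * k i j)

/-- `μ` is the law of the Markov chain with transition probabilities `P`
started at `x0`, as a measure on path space. -/
def IsPathMeasure {Ω : Type*} [Fintype Ω] [DecidableEq Ω] [MeasurableSpace Ω]
    (P : Ω → Ω → ℝ) (x0 : Ω) (μ : Measure (ℕ → Ω)) : Prop :=
  IsProbabilityMeasure μ ∧
    ∀ t : ℕ, ∀ f : ℕ → Ω,
      (μ {ω | ∀ s ≤ t, ω s = f s}).toReal =
        (if f 0 = x0 then ∏ s ∈ Finset.range t, P (f s) (f (s + 1)) else 0)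

/-- `μ` is a coupling of two copies of the Markov chain with transition
probabilities `P`, started at `x0` and `y0` respectively. -/
def IsCoupling {Ω : Type*} [Fintype Ω] [DecidableEq Ω] [MeasurableSpace Ω]
    (P : Ω → Ω → ℝ) (x0 y0 : Ω) (μ : Measure (ℕ → Ω × Ω)) : Prop :=
  IsProbabilityMeasure μ ∧
    (∀ t : ℕ, ∀ f : ℕ → Ω,
      (μ {ω | ∀ s ≤ t, (ω s).1 = f s}).toReal =
        (if f 0 = x0 then ∏ s ∈ Finset.range t, P (f s) (f (s + 1)) else 0)) ∧
    (∀ t : ℕ, ∀ f : ℕ → Ω,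
      (μ {ω | ∀ s ≤ t, (ω s).2 = f s}).toReal =
        (if f 0 = y0 then ∏ s ∈ Finset.range t, P (f s) (f (s + 1)) else 0))

/-!
Both copies of the dynamics are driven by the same randomness: a uniform vertex `v` and a
uniform threshold `u ∈ [0, 1]`; each copy sets its spin at `v` to `+1` iff `u ≤ r₊(S^v)`.
A chain `X_{t+1} = G X_t U_t` driven by i.i.d. `U_t ∼ ν` has transition matrix
`P x y = ν {G x = y}`, and for this `G` that matrix is the Glauber kernel, so both marginals
are Glauber dynamics.

Under the coupling the copies can only start or stop disagreeing at the chosen vertex, where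
they disagree after the step with probability `|r₊(S^v(σ)) - r₊(S^v(σ'))|`. Since
`r₊(s) = sigmoid (2βs)` is `β/2`-Lipschitz and `S^v` is a weighted sum of spins, averaging over
`v` gives `P d_i ≤ ∑ j, A i j • d_j` for the block distances `d_j`. As `P` and `A` have
nonnegative entries, this iterates to `P^t d_i ≤ ∑ j, (A^t) i j • d_j`.
-/

open Matrix
open scoped ENNReal

theorem mulVec_pow_le_sum_smul {S ι : Type*} [Fintype S] [DecidableEq S] [Fintype ι]
    [DecidableEq ι] {P : Matrix S S ℝ} (hP : ∀ x y, 0 ≤ P x y) {A : Matrix ι ι ℝ}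
    (hA : ∀ i j, 0 ≤ A i j) {D : ι → S → ℝ} (hD : ∀ i, P *ᵥ D i ≤ ∑ j, A i j • D j)
    (t : ℕ) (i : ι) : (P ^ t) *ᵥ D i ≤ ∑ j, (A ^ t) i j • D j := by
  induction t generalizing i with
  | zero => simp [Matrix.one_apply]
  | succ t ih =>
    have hPt : ∀ {u v : S → ℝ}, u ≤ v → P ^ t *ᵥ u ≤ P ^ t *ᵥ v := fun huv x =>
      Finset.sum_le_sum fun y _ => mul_le_mul_of_nonneg_left (huv y)
        (Matrix.pow_apply_nonneg hP t x y)
    calc (P ^ (t + 1)) *ᵥ D i = P ^ t *ᵥ (P *ᵥ D i) := by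
          rw [pow_succ, Matrix.mulVec_mulVec]
      _ ≤ P ^ t *ᵥ ∑ j, A i j • D j := hPt (hD i)
      _ = ∑ j, A i j • (P ^ t *ᵥ D j) := by
          simp only [Matrix.mulVec_sum, Matrix.mulVec_smul]
      _ ≤ ∑ j, A i j • ∑ l, (A ^ t) j l • D l :=
          Finset.sum_le_sum fun j _ => smul_le_smul_of_nonneg_left (ih j) (hA i j)
      _ = ∑ l, (A ^ (t + 1)) i l • D l := by
          simp only [Finset.smul_sum, smul_smul, pow_succ', Matrix.mul_apply, Finset.sum_smul]
          exact Finset.sum_comm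

section RandomOrbit

variable {S I : Type*}

def natCons (u : I) (V : ℕ → I) : ℕ → I
  | 0 => u
  | s + 1 => V s

/-- The chain `X_{t+1} = G X_t U_t` started at `x`, unrolled at the first step
(`X_{t+1}(x, U) = X_t(G x U₀, U ∘ succ)`) so that its Markov property comes down to the
splitting `ν ⊗ ν^ℕ ≃ ν^ℕ` of `infinitePi_map_cons`. -/
def randomOrbit (G : S → I → S) : S → (ℕ → I) → ℕ → S
  | x, _, 0 => x
  | x, U, t + 1 => randomOrbit G (G x (U 0)) (fun s => U (s + 1)) t

def randomMapPair (G : S → I → S) (p : S × S) (u : I) : S × S := (G p.1 u, G p.2 u)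

theorem randomOrbit_randomMapPair (G : S → I → S) (x y : S) (U : ℕ → I) (t : ℕ) :
    randomOrbit (randomMapPair G) (x, y) U t = (randomOrbit G x U t, randomOrbit G y U t) := by
  induction t generalizing x y U with
  | zero => rfl
  | succ t ih => exact ih _ _ _

variable [MeasurableSpace I] (ν : Measure I)

theorem measurable_natCons : Measurable fun q : I × (ℕ → I) => natCons q.1 q.2 :=
  measurable_pi_lambda _ fun s => by
    cases s with
    | zero => exact measurable_fst
    | succ s => exact (measurable_pi_apply s).comp measurable_snd

open Classical in
theorem infinitePi_map_cons [IsProbabilityMeasure ν] :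
    (ν.prod (Measure.infinitePi fun _ : ℕ => ν)).map (fun q => natCons q.1 q.2) =
      Measure.infinitePi fun _ => ν := by
  refine Measure.eq_infinitePi _ fun s t ht => ?_
  have hpre : (fun q : I × (ℕ → I) => natCons q.1 q.2) ⁻¹' (s : Set ℕ).pi t =
      {u | 0 ∈ s → u ∈ t 0} ×ˢ
        ((s.preimage (· + 1) (add_left_injective 1).injOn : Set ℕ).pi fun i => t (i + 1)) := by
    ext ⟨u, V⟩
    simp only [Set.mem_preimage, Set.mem_pi, Finset.mem_coe, Set.mem_prod, Set.mem_ofPred_eq,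
      Finset.mem_preimage]
    constructor
    · intro h
      exact ⟨h 0, fun i hi => h (i + 1) hi⟩
    · rintro ⟨h0, hs⟩ (_ | i) hi
      exacts [h0 hi, hs i hi]
  have hhead : ν {u | 0 ∈ s → u ∈ t 0} = if 0 ∈ s then ν (t 0) else 1 := by
    split_ifs with h0 <;> simp [h0]
  rw [Measure.map_apply measurable_natCons (.pi s.countable_toSet fun i _ => ht i), hpre,
    Measure.prod_prod, hhead, Measure.infinitePi_pi _ fun i _ => ht (i + 1),
    Finset.prod_preimage' (· + 1) s _ fun i => ν (t i),
    ← Finset.prod_filter_mul_prod_filter_not s (· = 0)]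
  congr 1
  · rw [Finset.prod_filter, Finset.prod_ite_eq']
  · refine Finset.prod_congr ?_ fun _ _ => rfl
    ext i
    cases i <;> simp

variable [MeasurableSpace S] {G : S → I → S}

theorem measurable_randomMapPair (hG : ∀ x, Measurable (G x)) (p : S × S) :
    Measurable (randomMapPair G p) :=
  (hG p.1).prodMk (hG p.2)

section Countable

variable [Countable S] [MeasurableSingletonClass S]

theorem measurable_randomOrbit (hG : ∀ x, Measurable (G x)) (x : S) :
    Measurable (randomOrbit G x) := by
  refine measurable_pi_lambda _ fun t => ?_
  induction t generalizing x with
  | zero => exact measurable_const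
  | succ t ih =>
    exact (measurable_from_prod_countable_right
      (f := fun p : S × (ℕ → I) => randomOrbit G p.1 p.2 t) ih).comp
      (((hG x).comp (measurable_pi_apply 0 : Measurable fun U : ℕ → I => U 0)).prodMk
        (measurable_pi_lambda _ fun s => measurable_pi_apply (s + 1)))

theorem measurable_uncurry_randomOrbit (hG : ∀ x, Measurable (G x)) :
    Measurable fun p : S × (ℕ → I) => randomOrbit G p.1 p.2 :=
  measurable_from_prod_countable_right fun x => measurable_randomOrbit hG x

theorem measurableSet_setOf_forall_le_eq (t : ℕ) (f : ℕ → S) :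
    MeasurableSet {ω : ℕ → S | ∀ s ≤ t, ω s = f s} := by
  simp only [Set.ofPred_forall]
  exact .iInter fun s => .iInter fun _ => measurableSet_eq_fun (measurable_pi_apply s)
    measurable_const

end Countable

variable [MeasurableSingletonClass S] [Fintype S] [IsProbabilityMeasure ν]

theorem infinitePi_randomOrbit_succ (hG : ∀ x, Measurable (G x)) {C : Set (ℕ → S)}
    (hC : MeasurableSet C) (x : S) :
    Measure.infinitePi (fun _ => ν) {U | (fun t => randomOrbit G x U (t + 1)) ∈ C} =
      ∑ y, ν (G x ⁻¹' {y}) * Measure.infinitePi (fun _ => ν) {U | randomOrbit G y U ∈ C} := by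
  have hE : MeasurableSet {U : ℕ → I | (fun t => randomOrbit G x U (t + 1)) ∈ C} :=
    measurableSet_preimage (measurable_pi_lambda _ fun t =>
      (measurable_pi_apply (t + 1)).comp (measurable_randomOrbit hG x)) hC
  have hmeas : MeasurableSet {q : I × (ℕ → I) | randomOrbit G (G x q.1) q.2 ∈ C} :=
    (measurable_uncurry_randomOrbit hG).comp (((hG x).comp measurable_fst).prodMk
      measurable_snd) hC
  have hF : Measurable fun y => Measure.infinitePi (fun _ => ν) {U | randomOrbit G y U ∈ C} :=
    measurable_of_countable _
  conv_lhs => rw [← infinitePi_map_cons ν, Measure.map_apply measurable_natCons hE]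
  change ν.prod _ {q | randomOrbit G (G x q.1) q.2 ∈ C} = _
  rw [Measure.prod_apply hmeas]
  change ∫⁻ u, (fun y => Measure.infinitePi (fun _ => ν) {U | randomOrbit G y U ∈ C}) (G x u) ∂ν
    = _
  rw [← lintegral_map hF (hG x), lintegral_fintype]
  refine Finset.sum_congr rfl fun y _ => ?_
  rw [Measure.map_apply (hG x) (measurableSet_singleton y), mul_comm]

theorem infinitePi_real_randomOrbit_succ (hG : ∀ x, Measurable (G x))
    {C : Set (ℕ → S)} (hC : MeasurableSet C) (x : S) :
    (Measure.infinitePi fun _ => ν).real {U | (fun t => randomOrbit G x U (t + 1)) ∈ C} =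
      ∑ y, ν.real (G x ⁻¹' {y}) *
        (Measure.infinitePi fun _ => ν).real {U | randomOrbit G y U ∈ C} := by
  simp only [measureReal_def, infinitePi_randomOrbit_succ ν hG hC x, ENNReal.toReal_sum
    fun y _ => ENNReal.mul_ne_top (measure_ne_top _ _) (measure_ne_top _ _),
    ENNReal.toReal_mul]

def randomMapMatrix (G : S → I → S) : Matrix S S ℝ := Matrix.of fun x y => ν.real (G x ⁻¹' {y})

theorem randomMapMatrix_mulVec_apply (hG : ∀ x, Measurable (G x)) (φ : S → ℝ) (x : S) :
    (randomMapMatrix ν G *ᵥ φ) x = ∫ u, φ (G x u) ∂ν := by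
  have := Measure.isProbabilityMeasure_map (μ := ν) (hG x).aemeasurable
  rw [← integral_map (hG x).aemeasurable (measurable_of_countable φ).aestronglyMeasurable,
    integral_fintype .of_finite]
  refine Finset.sum_congr rfl fun y _ => ?_
  rw [map_measureReal_apply (hG x) (measurableSet_singleton y), smul_eq_mul]
  rfl

variable [DecidableEq S]

theorem randomMapMatrix_pow_apply (hG : ∀ x, Measurable (G x)) (t : ℕ) (x y : S) :
    (randomMapMatrix ν G ^ t) x y =
      (Measure.infinitePi fun _ => ν).real {U | randomOrbit G x U t = y} := by
  induction t generalizing x with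
  | zero =>
    by_cases h : x = y <;> simp [randomOrbit, h]
  | succ t ih =>
    rw [pow_succ', Matrix.mul_apply]
    simp_rw [ih]
    exact (infinitePi_real_randomOrbit_succ ν hG (C := {ω | ω t = y})
      (measurableSet_eq_fun (measurable_pi_apply t) measurable_const) x).symm

theorem infinitePi_real_randomOrbit_cylinder (hG : ∀ x, Measurable (G x)) (t : ℕ) (x : S)
    (f : ℕ → S) :
    (Measure.infinitePi fun _ => ν).real {U | ∀ s ≤ t, randomOrbit G x U s = f s} =
      if f 0 = x then ∏ s ∈ Finset.range t, randomMapMatrix ν G (f s) (f (s + 1)) else 0 := by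
  induction t generalizing x f with
  | zero =>
    by_cases h : f 0 = x <;> simp [randomOrbit, h, eq_comm]
  | succ t ih =>
    have hC := measurableSet_setOf_forall_le_eq t fun s => f (s + 1)
    have hsplit : {U | ∀ s ≤ t + 1, randomOrbit G x U s = f s} =
        {_U | x = f 0} ∩ {U | (fun s => randomOrbit G x U (s + 1)) ∈
          {ω : ℕ → S | ∀ s ≤ t, ω s = f (s + 1)}} := by
      ext U
      simp only [Set.mem_ofPred_eq, Set.mem_inter_iff]
      constructor
      · intro h
        exact ⟨h 0 (Nat.zero_le _), fun s hs => h (s + 1) (Nat.succ_le_succ hs)⟩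
      · rintro ⟨h0, h⟩ (_ | s) hs
        exacts [h0, h s (Nat.le_of_succ_le_succ hs)]
    by_cases hf : f 0 = x
    · have hcyl := fun y => ih y fun s => f (s + 1)
      rw [hsplit, if_pos hf, show {_U : ℕ → I | x = f 0} = Set.univ from by simp [hf],
        Set.univ_inter, infinitePi_real_randomOrbit_succ ν hG hC]
      simp only [Set.mem_ofPred_eq, hcyl, mul_ite, mul_zero, Finset.sum_ite_eq, Finset.mem_univ,
        if_true, Finset.prod_range_succ']
      rw [mul_comm, hf]
      rfl
    · rw [if_neg hf, hsplit, show {_U : ℕ → I | x = f 0} = ∅ from by simp [Ne.symm hf],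
        Set.empty_inter, measureReal_empty]

theorem isCoupling_of_isPathMeasure_map {P : S → S → ℝ} {x y : S} {μ : Measure (ℕ → S × S)}
    (hμ : IsProbabilityMeasure μ) (h₁ : IsPathMeasure P x (μ.map fun ω s => (ω s).1))
    (h₂ : IsPathMeasure P y (μ.map fun ω s => (ω s).2)) : IsCoupling P x y μ := by
  refine ⟨hμ, fun t f => ?_, fun t f => ?_⟩
  · rw [← h₁.2 t f, Measure.map_apply (by fun_prop) (measurableSet_setOf_forall_le_eq t f)]
    rfl
  · rw [← h₂.2 t f, Measure.map_apply (by fun_prop) (measurableSet_setOf_forall_le_eq t f)]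
    rfl

theorem isPathMeasure_map_randomOrbit (hG : ∀ x, Measurable (G x)) (x : S) :
    IsPathMeasure (randomMapMatrix ν G) x
      ((Measure.infinitePi fun _ => ν).map (randomOrbit G x)) := by
  refine ⟨Measure.isProbabilityMeasure_map (measurable_randomOrbit hG x).aemeasurable,
    fun t f => ?_⟩
  rw [← measureReal_def, map_measureReal_apply (measurable_randomOrbit hG x)
    (measurableSet_setOf_forall_le_eq t f)]
  exact infinitePi_real_randomOrbit_cylinder ν hG t x f

theorem isCoupling_map_randomOrbit_randomMapPair (hG : ∀ x, Measurable (G x)) (x y : S) :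
    IsCoupling (randomMapMatrix ν G) x y
      ((Measure.infinitePi fun _ => ν).map (randomOrbit (randomMapPair G) (x, y))) := by
  have hmeas : Measurable (randomOrbit (randomMapPair G) (x, y)) :=
    measurable_randomOrbit (measurable_randomMapPair hG) (x, y)
  refine isCoupling_of_isPathMeasure_map (Measure.isProbabilityMeasure_map hmeas.aemeasurable)
    ?_ ?_
  · rw [Measure.map_map (by fun_prop) hmeas]
    convert isPathMeasure_map_randomOrbit ν hG x using 2
    funext U s
    exact congrArg Prod.fst (randomOrbit_randomMapPair G x y U s)
  · rw [Measure.map_map (by fun_prop) hmeas]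
    convert isPathMeasure_map_randomOrbit ν hG y using 2
    funext U s
    exact congrArg Prod.snd (randomOrbit_randomMapPair G x y U s)

theorem integral_map_randomOrbit (hG : ∀ x, Measurable (G x)) (x : S) (t : ℕ) (φ : S → ℝ) :
    ∫ ω, φ (ω t) ∂(Measure.infinitePi fun _ => ν).map (randomOrbit G x) =
      (randomMapMatrix ν G ^ t *ᵥ φ) x := by
  have hmeas := measurable_randomOrbit hG x
  have := Measure.isProbabilityMeasure_map (μ := Measure.infinitePi fun _ => ν) hmeas.aemeasurable
  rw [← integral_map (measurable_pi_apply t).aemeasurable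
    (measurable_of_countable φ).aestronglyMeasurable, integral_fintype .of_finite]
  refine Finset.sum_congr rfl fun y _ => ?_
  rw [map_measureReal_apply (measurable_pi_apply t) (measurableSet_singleton y),
    map_measureReal_apply hmeas (measurableSet_preimage (measurable_pi_apply t)
      (measurableSet_singleton y)), smul_eq_mul]
  exact congrArg (· * φ y) (randomMapMatrix_pow_apply ν hG t x y).symm

end RandomOrbit

section HeatBath

theorem rp_eq_sigmoid (β s : ℝ) : rp β s = sigmoid (2 * (β * s)) := by
  rw [rp, sigmoid_def, div_eq_iff (by positivity), ← div_eq_inv_mul, eq_div_iff (by positivity),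
    mul_add, mul_one, ← Real.exp_add]
  ring_nf

theorem rp_nonneg (β s : ℝ) : 0 ≤ rp β s := rp_eq_sigmoid β s ▸ sigmoid_nonneg _

theorem rp_le_one (β s : ℝ) : rp β s ≤ 1 := rp_eq_sigmoid β s ▸ sigmoid_le_one _

theorem rm_eq_one_sub_rp (β s : ℝ) : rm β s = 1 - rp β s := by
  rw [eq_sub_iff_add_eq, rp, rm, ← add_div, add_comm, div_self (by positivity)]

theorem abs_sigmoid_sub_le (a b : ℝ) : |sigmoid a - sigmoid b| ≤ |a - b| / 4 := by
  have hlip : LipschitzWith (1 / 4) sigmoid := by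
    refine lipschitzWith_of_nnnorm_deriv_le differentiable_sigmoid fun x => ?_
    rw [← NNReal.coe_le_coe, coe_nnnorm, deriv_sigmoid, Real.norm_eq_abs,
      abs_of_nonneg (mul_nonneg (sigmoid_nonneg x) (by linarith [sigmoid_le_one x]))]
    push_cast
    nlinarith [sq_nonneg (sigmoid x - 1 / 2)]
  have := hlip.dist_le_mul a b
  rw [Real.dist_eq, Real.dist_eq] at this
  push_cast at this
  linarith

theorem abs_rp_sub_le {β : ℝ} (hβ : 0 ≤ β) (s s' : ℝ) :
    |rp β s - rp β s'| ≤ β / 2 * |s - s'| := by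
  rw [rp_eq_sigmoid, rp_eq_sigmoid]
  refine (abs_sigmoid_sub_le _ _).trans (le_of_eq ?_)
  rw [← mul_sub, ← mul_sub, abs_mul, abs_mul, abs_two, abs_of_nonneg hβ]
  ring

variable {n : ℕ}

theorem half_abs_spin_sub (c c' : Bool) :
    1 / 2 * |spin c - spin c'| = if c = c' then 0 else 1 := by
  cases c <;> cases c' <;> norm_num [spin]

theorem blockDist_update (g : Fin n → Fin m) (σ σ' : Fin n → Bool) (v : Fin n) (c c' : Bool)
    (i : Fin m) :
    blockDist n g (Function.update σ v c) (Function.update σ' v c') i = blockDist n g σ σ' i +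
      if g v = i then 1 / 2 * |spin c - spin c'| - 1 / 2 * |spin (σ v) - spin (σ' v)| else 0 := by
  have hupd : (fun w => |spin (Function.update σ v c w) - spin (Function.update σ' v c' w)|) =
      Function.update (fun w => |spin (σ w) - spin (σ' w)|) v |spin c - spin c'| := by
    funext w
    by_cases h : w = v <;> simp [h]
  simp only [blockDist]
  rw [hupd]
  split_ifs with hv
  · rw [Finset.sum_update_of_mem (by simp [hv]), Finset.sdiff_singleton_eq_erase,
      ← Finset.add_sum_erase _ _ (by simp [hv] : v ∈ Finset.univ.filter fun w => g w = i)]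
    ring
  · rw [Finset.sum_update_of_notMem (by simp [hv]), add_zero]

theorem sum_mul_half_abs_spin_sub (g : Fin n → Fin m) (f : Fin m → ℝ) (σ σ' : Fin n → Bool) :
    ∑ w, f (g w) * (1 / 2 * |spin (σ w) - spin (σ' w)|) = ∑ j, f j * blockDist n g σ σ' j := by
  rw [← Finset.sum_fiberwise Finset.univ g]
  refine Finset.sum_congr rfl fun j _ => ?_
  rw [blockDist, Finset.mul_sum, Finset.mul_sum]
  refine Finset.sum_congr rfl fun w hw => ?_
  rw [(Finset.mem_filter.1 hw).2]

theorem abs_meanField_sub_le {k : Fin m → Fin m → ℝ} (hk : ∀ i j, 0 ≤ k i j) (g : Fin n → Fin m)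
    (σ σ' : Fin n → Bool) (v : Fin n) :
    |meanField n k g σ v - meanField n k g σ' v| ≤
      2 * (∑ w, k (g v) (g w) / n * (1 / 2 * |spin (σ w) - spin (σ' w)|) -
        k (g v) (g v) / n * (1 / 2 * |spin (σ v) - spin (σ' v)|)) := by
  rw [meanField, meanField, ← Finset.sum_sub_distrib, Finset.filter_ne',
    ← Finset.sum_erase_eq_sub (Finset.mem_univ v), Finset.mul_sum]
  refine (Finset.abs_sum_le_sum_abs _ _).trans (Finset.sum_le_sum fun w _ => le_of_eq ?_)
  rw [← mul_sub, abs_mul, abs_of_nonneg (div_nonneg (hk _ _) n.cast_nonneg)]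
  ring

theorem sum_abs_rp_sub_le {β : ℝ} (hβ : 0 ≤ β) {k : Fin m → Fin m → ℝ} (hk : ∀ i j, 0 ≤ k i j)
    (g : Fin n → Fin m) (σ σ' : Fin n → Bool) (i : Fin m) :
    ∑ v ∈ Finset.univ.filter (fun v => g v = i),
        |rp β (meanField n k g σ v) - rp β (meanField n k g σ' v)| ≤
      β * ((Finset.univ.filter fun v => g v = i).card * ∑ j, k i j / n * blockDist n g σ σ' j -
        k i i / n * blockDist n g σ σ' i) := by
  calc ∑ v ∈ Finset.univ.filter (fun v => g v = i),
        |rp β (meanField n k g σ v) - rp β (meanField n k g σ' v)|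
      ≤ ∑ v ∈ Finset.univ.filter (fun v => g v = i),
          β * (∑ w, k i (g w) / n * (1 / 2 * |spin (σ w) - spin (σ' w)|) -
            k i i / n * (1 / 2 * |spin (σ v) - spin (σ' v)|)) := by
        refine Finset.sum_le_sum fun v hv => ?_
        rw [← (Finset.mem_filter.1 hv).2]
        calc _ ≤ β / 2 * |meanField n k g σ v - meanField n k g σ' v| := abs_rp_sub_le hβ _ _
          _ ≤ β / 2 * (2 * _) := mul_le_mul_of_nonneg_left (abs_meanField_sub_le hk g σ σ' v)
              (by positivity)
          _ = _ := by ring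
    _ = _ := by
        rw [← Finset.mul_sum, Finset.sum_sub_distrib, Finset.sum_const, nsmul_eq_mul,
          sum_mul_half_abs_spin_sub g (fun j => k i j / n)]
        congr 2
        rw [blockDist, Finset.mul_sum, Finset.mul_sum]

instance : IsProbabilityMeasure (volume.restrict (Set.Icc (0 : ℝ) 1)) :=
  ⟨by simp⟩

theorem volume_restrict_Icc_real_Iic {a : ℝ} (h0 : 0 ≤ a) (h1 : a ≤ 1) :
    (volume.restrict (Set.Icc (0 : ℝ) 1)).real (Set.Iic a) = a := by
  have hinter : Set.Iic a ∩ Set.Icc 0 1 = Set.Icc 0 a := by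
    ext u
    simp only [Set.mem_inter_iff, Set.mem_Iic, Set.mem_Icc]
    exact ⟨fun h => ⟨h.2.1, h.1⟩, fun h => ⟨h.2, h.1, h.2.trans h1⟩⟩
  rw [measureReal_restrict_apply measurableSet_Iic, hinter, Real.volume_real_Icc_of_le h0,
    sub_zero]

theorem volume_restrict_Icc_real_Ioi {a : ℝ} (h0 : 0 ≤ a) (h1 : a ≤ 1) :
    (volume.restrict (Set.Icc (0 : ℝ) 1)).real (Set.Ioi a) = 1 - a := by
  rw [← Set.compl_Iic, probReal_compl_eq_one_sub measurableSet_Iic,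
    volume_restrict_Icc_real_Iic h0 h1]

theorem volume_restrict_Icc_real_decide_ne {a b : ℝ} (ha0 : 0 ≤ a) (ha1 : a ≤ 1) (hb0 : 0 ≤ b)
    (hb1 : b ≤ 1) :
    (volume.restrict (Set.Icc (0 : ℝ) 1)).real {u | decide (u ≤ a) ≠ decide (u ≤ b)} =
      |a - b| := by
  wlog hab : a ≤ b generalizing a b
  · simp_rw [ne_comm (a := decide (_ ≤ a)), abs_sub_comm a b]
    exact this hb0 hb1 ha0 ha1 (le_of_not_ge hab)
  have hset : {u : ℝ | decide (u ≤ a) ≠ decide (u ≤ b)} = Set.Iic b \ Set.Iic a := by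
    ext u
    by_cases hua : u ≤ a
    · simp [hua, hua.trans hab]
    · simp [hua, lt_of_not_ge hua]
  rw [hset, measureReal_sdiff (Set.Iic_subset_Iic.2 hab) measurableSet_Iic,
    volume_restrict_Icc_real_Iic hb0 hb1, volume_restrict_Icc_real_Iic ha0 ha1,
    abs_of_nonpos (sub_nonpos.2 hab)]
  ring

theorem volume_restrict_Icc_real_update_decide_le {a : ℝ} (h0 : 0 ≤ a) (h1 : a ≤ 1)
    (σ σ' : Fin n → Bool) (v : Fin n) :
    (volume.restrict (Set.Icc (0 : ℝ) 1)).real {u | Function.update σ v (decide (u ≤ a)) = σ'} =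
      (if σ' = Function.update σ v true then a else 0) +
        (if σ' = Function.update σ v false then 1 - a else 0) := by
  have hupd : ∀ b c : Bool, Function.update σ v b = Function.update σ v c ↔ b = c :=
    fun b c => (Function.update_injective σ v).eq_iff
  by_cases htrue : σ' = Function.update σ v true
  · have hfalse : σ' ≠ Function.update σ v false := by simp [htrue, hupd]
    rw [if_pos htrue, if_neg hfalse, add_zero]
    convert volume_restrict_Icc_real_Iic h0 h1 using 2
    ext u
    simp [htrue, hupd]
  · by_cases hfalse : σ' = Function.update σ v false
    · rw [if_neg htrue, if_pos hfalse, zero_add]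
      convert volume_restrict_Icc_real_Ioi h0 h1 using 2
      ext u
      simp [hfalse, hupd]
    · have hempty : {u : ℝ | Function.update σ v (decide (u ≤ a)) = σ'} = ∅ := by
        refine Set.eq_empty_of_forall_notMem fun u hu => ?_
        cases hb : decide (u ≤ a) <;> rw [Set.mem_ofPred_eq, hb] at hu
        exacts [hfalse hu.symm, htrue hu.symm]
      rw [if_neg htrue, if_neg hfalse, add_zero, hempty, measureReal_empty]

theorem integral_blockDist_update_decide {a b : ℝ} (ha0 : 0 ≤ a) (ha1 : a ≤ 1) (hb0 : 0 ≤ b)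
    (hb1 : b ≤ 1) (g : Fin n → Fin m) (σ σ' : Fin n → Bool) (v : Fin n) (i : Fin m) :
    ∫ u, blockDist n g (Function.update σ v (decide (u ≤ a)))
        (Function.update σ' v (decide (u ≤ b))) i ∂volume.restrict (Set.Icc (0 : ℝ) 1) =
      blockDist n g σ σ' i +
        if g v = i then |a - b| - 1 / 2 * |spin (σ v) - spin (σ' v)| else 0 := by
  simp only [blockDist_update]
  split_ifs
  · have hE : MeasurableSet {u : ℝ | decide (u ≤ a) ≠ decide (u ≤ b)} :=
      (measurableSet_eq_fun (Measurable.ite measurableSet_Iic measurable_const measurable_const)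
        (Measurable.ite measurableSet_Iic measurable_const measurable_const)).compl
    have hfun : (fun u : ℝ => blockDist n g σ σ' i + (1 / 2 * |spin (decide (u ≤ a)) -
        spin (decide (u ≤ b))| - 1 / 2 * |spin (σ v) - spin (σ' v)|)) =
        fun u => (blockDist n g σ σ' i - 1 / 2 * |spin (σ v) - spin (σ' v)|) +
          {u : ℝ | decide (u ≤ a) ≠ decide (u ≤ b)}.indicator 1 u := by
      funext u
      rw [half_abs_spin_sub, Set.indicator_apply]
      split_ifs <;> simp_all <;> ring
    rw [hfun, integral_add (integrable_const _) ((integrable_const 1).indicator hE),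
      integral_const, integral_indicator_one hE,
      volume_restrict_Icc_real_decide_ne ha0 ha1 hb0 hb1, probReal_univ, one_smul]
    ring
  · simp

noncomputable def heatBathNoise (n : ℕ) [NeZero n] : Measure (Fin n × ℝ) :=
  (PMF.uniformOfFintype (Fin n)).toMeasure.prod (volume.restrict (Set.Icc 0 1))

noncomputable def heatBathMove (n : ℕ) (β : ℝ) (k : Fin m → Fin m → ℝ) (g : Fin n → Fin m)
    (σ : Fin n → Bool) (q : Fin n × ℝ) : Fin n → Bool :=
  Function.update σ q.1 (decide (q.2 ≤ rp β (meanField n k g σ q.1)))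

theorem measurable_heatBathMove (β : ℝ) (k : Fin m → Fin m → ℝ) (g : Fin n → Fin m)
    (σ : Fin n → Bool) : Measurable (heatBathMove n β k g σ) :=
  measurable_from_prod_countable_right fun v =>
    (measurable_of_countable (Function.update σ v)).comp
      (Measurable.ite (measurableSet_Iic (a := rp β (meanField n k g σ v)))
        measurable_const measurable_const)

variable [NeZero n]

theorem uniformOfFintype_toMeasure_real_singleton (v : Fin n) :
    (PMF.uniformOfFintype (Fin n)).toMeasure.real {v} = (n : ℝ)⁻¹ := by
  rw [measureReal_def, PMF.toMeasure_apply_singleton _ _ (measurableSet_singleton v),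
    PMF.uniformOfFintype_apply, Fintype.card_fin, ENNReal.toReal_inv, ENNReal.toReal_natCast]

instance : IsProbabilityMeasure (heatBathNoise n) := by
  unfold heatBathNoise; infer_instance

theorem heatBathNoise_real_apply {E : Set (Fin n × ℝ)} (hE : MeasurableSet E) :
    (heatBathNoise n).real E =
      ∑ v, (n : ℝ)⁻¹ * (volume.restrict (Set.Icc (0 : ℝ) 1)).real (Prod.mk v ⁻¹' E) := by
  rw [measureReal_def, heatBathNoise, Measure.prod_apply hE, lintegral_fintype,
    ENNReal.toReal_sum fun v _ => ENNReal.mul_ne_top (measure_ne_top _ _) (measure_ne_top _ _)]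
  simp only [ENNReal.toReal_mul]
  refine Finset.sum_congr rfl fun v _ => ?_
  change _ * (PMF.uniformOfFintype (Fin n)).toMeasure.real {v} = _
  rw [uniformOfFintype_toMeasure_real_singleton, mul_comm]
  rfl

theorem randomMapMatrix_heatBathMove (β : ℝ) (k : Fin m → Fin m → ℝ) (g : Fin n → Fin m)
    (σ σ' : Fin n → Bool) :
    randomMapMatrix (heatBathNoise n) (heatBathMove n β k g) σ σ' = glauber n β k g σ σ' := by
  rw [randomMapMatrix, Matrix.of_apply, heatBathNoise_real_apply
    (measurable_heatBathMove β k g σ (measurableSet_singleton σ')), glauber, one_div,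
    Finset.mul_sum]
  refine Finset.sum_congr rfl fun v _ => ?_
  rw [rm_eq_one_sub_rp, ← volume_restrict_Icc_real_update_decide_le (rp_nonneg _ _)
    (rp_le_one _ _)]
  rfl

theorem integral_heatBathNoise {f : Fin n × ℝ → ℝ} (hf : Integrable f (heatBathNoise n)) :
    ∫ q, f q ∂heatBathNoise n =
      ∑ v, (n : ℝ)⁻¹ * ∫ u, f (v, u) ∂volume.restrict (Set.Icc (0 : ℝ) 1) := by
  rw [heatBathNoise, integral_prod f hf, integral_fintype .of_finite]
  refine Finset.sum_congr rfl fun v _ => ?_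
  rw [uniformOfFintype_toMeasure_real_singleton, smul_eq_mul]

theorem integral_blockDist_heatBathMove (β : ℝ) (k : Fin m → Fin m → ℝ) (g : Fin n → Fin m)
    (σ σ' : Fin n → Bool) (i : Fin m) :
    ∫ q, blockDist n g (heatBathMove n β k g σ q) (heatBathMove n β k g σ' q) i ∂heatBathNoise n =
      blockDist n g σ σ' i + (n : ℝ)⁻¹ * ∑ v ∈ Finset.univ.filter (fun v => g v = i),
        (|rp β (meanField n k g σ v) - rp β (meanField n k g σ' v)| -
          1 / 2 * |spin (σ v) - spin (σ' v)|) := by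
  have hF : Measurable fun q => (heatBathMove n β k g σ q, heatBathMove n β k g σ' q) :=
    (measurable_heatBathMove β k g σ).prodMk (measurable_heatBathMove β k g σ')
  have hint : Integrable ((fun p : (Fin n → Bool) × (Fin n → Bool) => blockDist n g p.1 p.2 i) ∘
      fun q => (heatBathMove n β k g σ q, heatBathMove n β k g σ' q)) (heatBathNoise n) :=
    Integrable.of_finite.comp_measurable hF
  rw [integral_heatBathNoise (f := fun q => blockDist n g (heatBathMove n β k g σ q)
    (heatBathMove n β k g σ' q) i) hint]
  simp only [heatBathMove]
  simp only [integral_blockDist_update_decide (rp_nonneg _ _) (rp_le_one _ _) (rp_nonneg _ _)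
    (rp_le_one _ _), mul_add, Finset.sum_add_distrib, Finset.sum_const, Finset.card_univ,
    Fintype.card_fin, nsmul_eq_mul, ← Finset.mul_sum, Finset.sum_ite, mul_zero, add_zero]
  rw [← mul_assoc, mul_inv_cancel₀ (Nat.cast_ne_zero.2 (NeZero.ne n)), one_mul]

noncomputable def contractionMatrix (n : ℕ) (β : ℝ) (p : Fin m → ℝ) (k : Fin m → Fin m → ℝ) :
    Matrix (Fin m) (Fin m) ℝ :=
  Matrix.of fun i j =>
    if i = j then 1 - 1 / (n : ℝ) + β * (k i i / n) * (p i - 1 / n) else β * p i * k i j / n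

theorem contractionMatrix_apply_nonneg {β : ℝ} (hβ : 0 ≤ β) {p : Fin m → ℝ}
    {k : Fin m → Fin m → ℝ} (hk : ∀ i j, 0 ≤ k i j) (hp : ∀ i, 1 / (n : ℝ) ≤ p i) (i j : Fin m) :
    0 ≤ contractionMatrix n β p k i j := by
  have hn : (1 : ℝ) ≤ n := Nat.one_le_cast.2 (Nat.pos_of_ne_zero (NeZero.ne n))
  have hinv : 1 / (n : ℝ) ≤ 1 := (div_le_one (by linarith)).2 hn
  have hpi : 0 ≤ p i := (one_div_nonneg.2 n.cast_nonneg).trans (hp i)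
  rw [contractionMatrix, Matrix.of_apply]
  split_ifs
  · have := mul_nonneg (mul_nonneg hβ (div_nonneg (hk i i) n.cast_nonneg)) (sub_nonneg.2 (hp i))
    linarith
  · exact div_nonneg (mul_nonneg (mul_nonneg hβ hpi) (hk i j)) n.cast_nonneg

theorem sum_contractionMatrix_mul (β : ℝ) (p : Fin m → ℝ) (k : Fin m → Fin m → ℝ)
    (D : Fin m → ℝ) (i : Fin m) :
    ∑ j, contractionMatrix n β p k i j * D j =
      D i - D i / n + β / n * (n * p i * ∑ j, k i j / n * D j - k i i / n * D i) := by
  have hrest : ∀ j ∈ Finset.univ.erase i,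
      contractionMatrix n β p k i j * D j = β * p i * (k i j / n * D j) := fun j hj => by
    rw [contractionMatrix, Matrix.of_apply, if_neg (Finset.ne_of_mem_erase hj).symm]
    ring
  rw [← Finset.add_sum_erase _ _ (Finset.mem_univ i),
    ← Finset.add_sum_erase _ _ (Finset.mem_univ i), Finset.sum_congr rfl hrest, ← Finset.mul_sum,
    contractionMatrix, Matrix.of_apply, if_pos rfl]
  field_simp [Nat.cast_ne_zero.2 (NeZero.ne n)]
  ring

theorem mulVec_blockDist_le_contractionMatrix {β : ℝ} (hβ : 0 ≤ β) {p : Fin m → ℝ}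
    {k : Fin m → Fin m → ℝ} (hk : ∀ i j, 0 ≤ k i j) {g : Fin n → Fin m}
    (hcard : ∀ i, ((Finset.univ.filter fun v => g v = i).card : ℝ) = n * p i) (i : Fin m) :
    randomMapMatrix (heatBathNoise n) (randomMapPair (heatBathMove n β k g)) *ᵥ
        (fun z => blockDist n g z.1 z.2 i) ≤
      ∑ j, contractionMatrix n β p k i j •
        fun z : (Fin n → Bool) × (Fin n → Bool) => blockDist n g z.1 z.2 j := by
  rintro ⟨σ, σ'⟩
  rw [randomMapMatrix_mulVec_apply _ (measurable_randomMapPair (measurable_heatBathMove β k g)),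
    Finset.sum_apply]
  simp only [randomMapPair, Pi.smul_apply, smul_eq_mul]
  have hblock : ∑ v ∈ Finset.univ.filter (fun v => g v = i), 1 / 2 * |spin (σ v) - spin (σ' v)| =
      blockDist n g σ σ' i := by
    rw [blockDist, Finset.mul_sum]
  have hsum := sum_abs_rp_sub_le hβ hk g σ σ' i
  rw [hcard] at hsum
  rw [integral_blockDist_heatBathMove, sum_contractionMatrix_mul, Finset.sum_sub_distrib, hblock]
  calc _ ≤ blockDist n g σ σ' i + (n : ℝ)⁻¹ * (β * (n * p i * ∑ j, k i j / n *
          blockDist n g σ σ' j - k i i / n * blockDist n g σ σ' i) - blockDist n g σ σ' i) := by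
        gcongr
    _ = _ := by ring

end HeatBath

theorem coupling_contraction_matrix_general
    (m : ℕ) (p : Fin m → ℝ) (k : Fin m → Fin m → ℝ)
    (hP : Params m p k)
    (β : ℝ) (hβ : 0 ≤ β)
    (n : ℕ) (g : Fin n → Fin m) (hg : IsPartition n p g)
    (A : Matrix (Fin m) (Fin m) ℝ)
    (hA : ∀ i j, A i j =
      if i = j then 1 - 1 / (n : ℝ) + β * (k i i / n) * (p i - 1 / n)
      else β * p i * k i j / n)
    (σ0 σ0' : Fin n → Bool) :
    ∃ μ : Measure (ℕ → (Fin n → Bool) × (Fin n → Bool)),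
      IsCoupling (glauber n β k g) σ0 σ0' μ ∧
      ∀ t : ℕ, ∀ i : Fin m,
        (∫ ω, blockDist n g (ω t).1 (ω t).2 i ∂μ) ≤
          (A ^ t).mulVec (fun j => blockDist n g σ0 σ0' j) i := by
  obtain ⟨hn, hcard⟩ := hg
  obtain rfl : A = contractionMatrix n β p k := Matrix.ext hA
  have : NeZero n := ⟨hn.ne'⟩
  have hk : ∀ i j, 0 ≤ k i j := fun i j => (hP.hkpos i j).le
  have hp : ∀ i, 1 / (n : ℝ) ≤ p i := fun i => by
    have hpos : (0 : ℝ) < (Finset.univ.filter fun v => g v = i).card :=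
      hcard i ▸ mul_pos (Nat.cast_pos.2 hn) (hP.hp i)
    rw [div_le_iff₀ (Nat.cast_pos.2 hn), mul_comm, ← hcard i]
    exact Nat.one_le_cast.2 (Nat.cast_pos.1 hpos)
  have hG := measurable_heatBathMove β k g
  refine ⟨(Measure.infinitePi fun _ => heatBathNoise n).map
    (randomOrbit (randomMapPair (heatBathMove n β k g)) (σ0, σ0')), ?_, fun t i => ?_⟩
  · have hglauber : randomMapMatrix (heatBathNoise n) (heatBathMove n β k g) = glauber n β k g :=
      funext₂ (randomMapMatrix_heatBathMove β k g)
    simpa only [hglauber] using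
      isCoupling_map_randomOrbit_randomMapPair (heatBathNoise n) hG σ0 σ0'
  · rw [integral_map_randomOrbit (heatBathNoise n) (measurable_randomMapPair hG) _ t
      (fun z => blockDist n g z.1 z.2 i)]
    refine (mulVec_pow_le_sum_smul (fun _ _ => measureReal_nonneg)
      (contractionMatrix_apply_nonneg hβ hk hp)
      (mulVec_blockDist_le_contractionMatrix hβ hk hcard) t i (σ0, σ0')).trans_eq ?_
    simp [Matrix.mulVec, dotProduct]

/-- for any two starting configurations there is a coupling of the
Glauber dynamics whose vector of expected block Hamming distances contracts,
componentwise, like `A^t` applied to the initial distance vector. -/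
theorem coupling_contraction_matrix
    (m : ℕ) (p : Fin m → ℝ) (k : Fin m → Fin m → ℝ)
    (hP : Params m p k)
    (β : ℝ) (hβ : 0 ≤ β)
    (n : ℕ) (hn : 0 < n) (g : Fin n → Fin m) (hg : IsPartition n p g)
    (A : Matrix (Fin m) (Fin m) ℝ)
    (hA : ∀ i j, A i j =
      if i = j then 1 - 1 / (n : ℝ) + β * (k i i / n) * (p i - 1 / n)
      else β * p i * k i j / n)
    (σ0 σ0' : Fin n → Bool) :
    ∃ μ : Measure (ℕ → (Fin n → Bool) × (Fin n → Bool)),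
      IsCoupling (glauber n β k g) σ0 σ0' μ ∧
      ∀ t : ℕ, ∀ i : Fin m,
        (∫ ω, blockDist n g (ω t).1 (ω t).2 i ∂μ) ≤
          (A ^ t).mulVec (fun j => blockDist n g σ0 σ0' j) i :=
  coupling_contraction_matrix_general m p k hP β hβ n g hg A hA σ0 σ0'

end MultiIsing
end

section
/- Let (Z_t)_{t≥0} be a time-homogeneous Markov chain on a finite state space embedded in ℝ^m, with E_s denoting expectation when Z_0 = s. Suppose there exists 0 < κ < 1 such that for all starting states s, s' and all t ≥ 0, ‖E_s Z_t − E_{s'} Z_t‖₁ ≤ κ^t ‖s − s'‖₁. Define v_t := sup_{s} Var_s(Z_t), where Var_s(Z_t) := E_s[‖Z_t − E_s Z_t‖₂²]. Then for all t ≥ 1, v_t ≤ m · v_1 · min{t, (1−κ²)^{−1}}. -/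
open Finset MeasureTheory Real Filter

namespace MultiIsing

variable {m : ℕ}

/-- The expectation vector `E_s Z_t` for a finite Markov chain with transition
matrix `P`, embedded in `ℝ^m` via `Z`. -/
noncomputable def EZ {S : Type*} [Fintype S] [DecidableEq S] {m : ℕ}
    (P : S → S → ℝ) (Z : S → Fin m → ℝ) (t : ℕ) (s : S) (i : Fin m) : ℝ :=
  ∑ y, iter P t s y * Z y i

/-- The ℓ²-norm variance `Var_s(Z_t) = E_s[‖Z_t - E_s Z_t‖₂²]`. -/
noncomputable def VarZ {S : Type*} [Fintype S] [DecidableEq S] {m : ℕ}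
    (P : S → S → ℝ) (Z : S → Fin m → ℝ) (t : ℕ) (s : S) : ℝ :=
  ∑ y, iter P t s y * ∑ i, (Z y i - EZ P Z t s i) ^ 2

section AuxVB

open Finset

variable {S : Type*} [Fintype S] [DecidableEq S]

lemma vb_iter_nonneg (P : S → S → ℝ) (hP0 : ∀ x y, 0 ≤ P x y) :
    ∀ t x y, 0 ≤ iter P t x y := by
  intro t
  induction t with
  | zero => intro x y; simp only [iter]; split <;> norm_num
  | succ t ih =>
      intro x y
      exact Finset.sum_nonneg fun z _ => mul_nonneg (ih x z) (hP0 z y)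

lemma vb_iter_sum (P : S → S → ℝ) (hP1 : ∀ x, ∑ y, P x y = 1) :
    ∀ t x, ∑ y, iter P t x y = 1 := by
  intro t
  induction t with
  | zero => intro x; simp [iter]
  | succ t ih =>
      intro x
      have h : ∑ y, iter P (t+1) x y = ∑ z, iter P t x z * ∑ y, P z y := by
        simp only [iter, Finset.mul_sum]
        exact Finset.sum_comm
      rw [h]
      simp [hP1, ih]

lemma vb_iter_succ_left (P : S → S → ℝ) :
    ∀ t (x y : S), iter P (t+1) x y = ∑ z, P x z * iter P t z y := by
  intro t
  induction t with
  | zero => intro x y; simp [iter]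
  | succ t ih =>
      intro x y
      calc iter P (t+2) x y = ∑ z, iter P (t+1) x z * P z y := rfl
        _ = ∑ z, (∑ w, P x w * iter P t w z) * P z y := by
            refine Finset.sum_congr rfl fun z _ => ?_; rw [ih]
        _ = ∑ w, P x w * ∑ z, iter P t w z * P z y := by
            simp only [Finset.sum_mul, Finset.mul_sum, mul_assoc]
            exact Finset.sum_comm
        _ = ∑ w, P x w * iter P (t+1) w y := rfl

lemma vb_iter_one (P : S → S → ℝ) (x y : S) : iter P 1 x y = P x y := by
  simp [iter]

omit [DecidableEq S] in
lemma vb_wsum_expand (w f : S → ℝ) (hw : ∑ y, w y = 1) (c : ℝ) :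
    ∑ y, w y * (f y - c) ^ 2
      = (∑ y, w y * f y ^ 2) - 2 * c * (∑ y, w y * f y) + c ^ 2 := by
  have h : ∀ y, w y * (f y - c) ^ 2
      = w y * f y ^ 2 - 2 * c * (w y * f y) + c ^ 2 * w y := fun y => by ring
  rw [Finset.sum_congr rfl fun y _ => h y]
  rw [Finset.sum_add_distrib, Finset.sum_sub_distrib, ← Finset.mul_sum, ← Finset.mul_sum, hw]
  ring

omit [DecidableEq S] in
lemma vb_wsum_sq_shift (w f : S → ℝ) (hw : ∑ y, w y = 1) (c : ℝ) :
    ∑ y, w y * (f y - c) ^ 2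
      = (∑ y, w y * (f y - ∑ y', w y' * f y') ^ 2) + ((∑ y', w y' * f y') - c) ^ 2 := by
  rw [vb_wsum_expand w f hw c, vb_wsum_expand w f hw (∑ y', w y' * f y')]
  ring

omit [DecidableEq S] in
lemma vb_wsum_var_pair (w f : S → ℝ) (hw : ∑ y, w y = 1) :
    ∑ y, w y * (f y - ∑ y', w y' * f y') ^ 2
      = (1/2) * ∑ y, ∑ y', w y * w y' * (f y - f y') ^ 2 := by
  have hin : ∀ y, ∑ y', w y * w y' * (f y - f y') ^ 2
      = w y * f y ^ 2 - 2 * (w y * f y) * (∑ y', w y' * f y')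
        + w y * (∑ y', w y' * f y' ^ 2) := by
    intro y
    have h : ∀ y', w y * w y' * (f y - f y') ^ 2
        = (w y * f y ^ 2) * w y' - (2 * (w y * f y)) * (w y' * f y')
          + w y * (w y' * f y' ^ 2) := fun y' => by ring
    rw [Finset.sum_congr rfl fun y' _ => h y']
    rw [Finset.sum_add_distrib, Finset.sum_sub_distrib, ← Finset.mul_sum, ← Finset.mul_sum,
      ← Finset.mul_sum, hw]
    ring
  rw [Finset.sum_congr rfl fun y _ => hin y]
  rw [Finset.sum_add_distrib, Finset.sum_sub_distrib, ← Finset.sum_mul, ← Finset.sum_mul,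
    ← Finset.mul_sum, hw, vb_wsum_expand w f hw]
  ring

omit [DecidableEq S] in
lemma vb_swap_mul_sum {ι : Type*} [Fintype ι] (w : S → ℝ) (F : S → ι → ℝ) :
    ∑ y, w y * ∑ i, F y i = ∑ i, ∑ y, w y * F y i := by
  simp only [Finset.mul_sum]
  exact Finset.sum_comm

omit [DecidableEq S] in
lemma vb_kernel_swap (w : S → ℝ) (u : S → S → ℝ) (F : S → ℝ) :
    ∑ y, (∑ z, w z * u z y) * F y = ∑ z, w z * ∑ y, u z y * F y := by
  simp only [Finset.sum_mul, mul_assoc]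
  rw [Finset.sum_comm]
  simp only [← Finset.mul_sum]

lemma vb_sum_sq_le_sq_sum_abs {ι : Type*} [Fintype ι] (a : ι → ℝ) :
    ∑ i, a i ^ 2 ≤ (∑ i, |a i|) ^ 2 := by
  calc ∑ i, a i ^ 2 = ∑ i, |a i| * |a i| := by
        refine Finset.sum_congr rfl fun i _ => ?_
        rw [sq, ← abs_mul_abs_self]
    _ ≤ ∑ i, |a i| * (∑ j, |a j|) := by
        refine Finset.sum_le_sum fun i _ => ?_
        exact mul_le_mul_of_nonneg_left
          (Finset.single_le_sum (fun j _ => abs_nonneg (a j)) (Finset.mem_univ i))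
          (abs_nonneg _)
    _ = (∑ i, |a i|) ^ 2 := by rw [← Finset.sum_mul, sq]

end AuxVB

/-- if the expectations of a finite Markov chain embedded in `ℝ^m`
contract in ℓ¹ at rate `κ ∈ (0,1)`, then the worst-case ℓ² variance satisfies
`v_t ≤ m v₁ min(t, (1-κ²)⁻¹)`. -/
theorem variance_bound_of_contraction
    {S : Type*} [Fintype S] [DecidableEq S] [Nonempty S] (m : ℕ)
    (P : S → S → ℝ) (hP0 : ∀ x y, 0 ≤ P x y) (hP1 : ∀ x, ∑ y, P x y = 1)
    (Z : S → Fin m → ℝ)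
    (κ : ℝ) (hκ0 : 0 < κ) (hκ1 : κ < 1)
    (hcontr : ∀ s s' : S, ∀ t : ℕ,
      (∑ i, |EZ P Z t s i - EZ P Z t s' i|) ≤ κ ^ t * ∑ i, |Z s i - Z s' i|) :
    ∀ t : ℕ, 1 ≤ t →
      (⨆ s : S, VarZ P Z t s) ≤
        (m : ℝ) * (⨆ s : S, VarZ P Z 1 s) * min (t : ℝ) ((1 - κ ^ 2)⁻¹) := by
  have hI0 := vb_iter_nonneg P hP0
  have hI1 := vb_iter_sum P hP1
  have hEZdef : ∀ (t : ℕ) (z : S) (i : Fin m),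
      (∑ y, iter P t z y * Z y i) = EZ P Z t z i := fun _ _ _ => rfl
  have hVswap : ∀ (t : ℕ) (s : S),
      VarZ P Z t s = ∑ i, ∑ y, iter P t s y * (Z y i - EZ P Z t s i) ^ 2 :=
    fun t s => vb_swap_mul_sum _ _
  have hbdd : ∀ t : ℕ, BddAbove (Set.range fun s : S => VarZ P Z t s) :=
    fun t => Set.Finite.bddAbove (Set.finite_range _)
  set v : ℕ → ℝ := fun t => ⨆ s : S, VarZ P Z t s with hv
  have hle : ∀ (t : ℕ) (s : S), VarZ P Z t s ≤ v t := fun t s => le_ciSup (hbdd t) s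
  have hVnn : ∀ (t : ℕ) (s : S), 0 ≤ VarZ P Z t s := fun t s =>
    Finset.sum_nonneg fun y _ => mul_nonneg (hI0 t s y)
      (Finset.sum_nonneg fun i _ => sq_nonneg _)
  obtain ⟨s₀⟩ := (inferInstance : Nonempty S)
  have hvnn : ∀ t, 0 ≤ v t := fun t => le_trans (hVnn t s₀) (hle t s₀)
  -- EZ recursion
  have hEZsucc : ∀ (t : ℕ) (s : S) (i : Fin m),
      EZ P Z (t+1) s i = ∑ z, P s z * EZ P Z t z i := by
    intro t s i
    calc EZ P Z (t+1) s i = ∑ y, (∑ z, P s z * iter P t z y) * Z y i := by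
          unfold EZ
          exact Finset.sum_congr rfl fun y _ => by rw [vb_iter_succ_left]
      _ = ∑ z, P s z * ∑ y, iter P t z y * Z y i := vb_kernel_swap _ _ _
      _ = ∑ z, P s z * EZ P Z t z i := rfl
  -- VarZ at time 1, pair form
  have hVar1 : ∀ s : S, VarZ P Z 1 s
      = (1/2) * ∑ z, ∑ z', P s z * P s z' * ∑ i, (Z z i - Z z' i) ^ 2 := by
    intro s
    have hEZ1 : ∀ i : Fin m, EZ P Z 1 s i = ∑ y, P s y * Z y i := by
      intro i; unfold EZ
      exact Finset.sum_congr rfl fun y _ => by rw [vb_iter_one]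
    calc VarZ P Z 1 s = ∑ i, ∑ y, P s y * (Z y i - ∑ y', P s y' * Z y' i) ^ 2 := by
          rw [hVswap 1 s]
          refine Finset.sum_congr rfl fun i _ => Finset.sum_congr rfl fun y _ => ?_
          rw [vb_iter_one, hEZ1]
      _ = ∑ i, (1/2) * ∑ z, ∑ z', P s z * P s z' * (Z z i - Z z' i) ^ 2 :=
          Finset.sum_congr rfl fun i _ =>
            vb_wsum_var_pair (fun y => P s y) (fun y => Z y i) (hP1 s)
      _ = (1/2) * ∑ z, ∑ z', P s z * P s z' * ∑ i, (Z z i - Z z' i) ^ 2 := by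
          rw [← Finset.mul_sum]
          congr 1
          rw [Finset.sum_comm]
          refine Finset.sum_congr rfl fun z _ => ?_
          rw [Finset.sum_comm]
          exact Finset.sum_congr rfl fun z' _ => by rw [← Finset.mul_sum]
  -- variance decomposition (law of total variance at the first step)
  have hdec : ∀ (t : ℕ) (s : S), VarZ P Z (t+1) s
      = (∑ z, P s z * VarZ P Z t z)
        + ∑ z, P s z * ∑ i, (EZ P Z t z i - EZ P Z (t+1) s i) ^ 2 := by
    intro t s
    have step2 : ∀ z : S,
        ∑ y, iter P t z y * ∑ i, (Z y i - EZ P Z (t+1) s i) ^ 2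
          = VarZ P Z t z + ∑ i, (EZ P Z t z i - EZ P Z (t+1) s i) ^ 2 := by
      intro z
      rw [vb_swap_mul_sum]
      calc ∑ i, ∑ y, iter P t z y * (Z y i - EZ P Z (t+1) s i) ^ 2
          = ∑ i, ((∑ y, iter P t z y * (Z y i - EZ P Z t z i) ^ 2)
              + (EZ P Z t z i - EZ P Z (t+1) s i) ^ 2) := by
            refine Finset.sum_congr rfl fun i _ => ?_
            have h := vb_wsum_sq_shift (fun y => iter P t z y) (fun y => Z y i)
              (hI1 t z) (EZ P Z (t+1) s i)
            simpa only [hEZdef] using h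
        _ = VarZ P Z t z + ∑ i, (EZ P Z t z i - EZ P Z (t+1) s i) ^ 2 := by
            rw [Finset.sum_add_distrib, ← hVswap t z]
    calc VarZ P Z (t+1) s
        = ∑ y, (∑ z, P s z * iter P t z y) * ∑ i, (Z y i - EZ P Z (t+1) s i) ^ 2 := by
          unfold VarZ
          exact Finset.sum_congr rfl fun y _ => by rw [vb_iter_succ_left]
      _ = ∑ z, P s z * ∑ y, iter P t z y * ∑ i, (Z y i - EZ P Z (t+1) s i) ^ 2 :=
          vb_kernel_swap _ _ _
      _ = ∑ z, P s z * (VarZ P Z t z + ∑ i, (EZ P Z t z i - EZ P Z (t+1) s i) ^ 2) :=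
          Finset.sum_congr rfl fun z _ => by rw [step2 z]
      _ = _ := by simp only [mul_add, Finset.sum_add_distrib]
  -- bound on the drift term
  have hW : ∀ (t : ℕ) (s : S),
      ∑ z, P s z * ∑ i, (EZ P Z t z i - EZ P Z (t+1) s i) ^ 2
        ≤ (m:ℝ) * κ ^ (2*t) * v 1 := by
    intro t s
    have hpairlaw : ∑ z, P s z * ∑ i, (EZ P Z t z i - EZ P Z (t+1) s i) ^ 2
        = (1/2) * ∑ z, ∑ z', P s z * P s z' * ∑ i, (EZ P Z t z i - EZ P Z t z' i) ^ 2 := by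
      rw [vb_swap_mul_sum]
      calc ∑ i, ∑ z, P s z * (EZ P Z t z i - EZ P Z (t+1) s i) ^ 2
          = ∑ i, (1/2) * ∑ z, ∑ z', P s z * P s z' * (EZ P Z t z i - EZ P Z t z' i) ^ 2 := by
            refine Finset.sum_congr rfl fun i _ => ?_
            have h2 := vb_wsum_var_pair (fun z => P s z) (fun z => EZ P Z t z i) (hP1 s)
            rw [Finset.sum_congr rfl fun z (_ : z ∈ Finset.univ) => by rw [hEZsucc t s i]]
            exact h2
        _ = (1/2) * ∑ z, ∑ z', P s z * P s z' * ∑ i, (EZ P Z t z i - EZ P Z t z' i) ^ 2 := by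
            rw [← Finset.mul_sum]
            congr 1
            rw [Finset.sum_comm]
            refine Finset.sum_congr rfl fun z _ => ?_
            rw [Finset.sum_comm]
            exact Finset.sum_congr rfl fun z' _ => by rw [← Finset.mul_sum]
    rw [hpairlaw]
    have hpt : ∀ z z' : S, ∑ i, (EZ P Z t z i - EZ P Z t z' i) ^ 2
        ≤ κ ^ (2*t) * ((m:ℝ) * ∑ i, (Z z i - Z z' i) ^ 2) := by
      intro z z'
      calc ∑ i, (EZ P Z t z i - EZ P Z t z' i) ^ 2
          ≤ (∑ i, |EZ P Z t z i - EZ P Z t z' i|) ^ 2 := vb_sum_sq_le_sq_sum_abs _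
        _ ≤ (κ ^ t * ∑ i, |Z z i - Z z' i|) ^ 2 := by
            apply pow_le_pow_left₀ (Finset.sum_nonneg fun i _ => abs_nonneg _) (hcontr z z' t)
        _ = κ ^ (2*t) * (∑ i, |Z z i - Z z' i|) ^ 2 := by
            rw [mul_pow, ← pow_mul, mul_comm t 2]
        _ ≤ κ ^ (2*t) * ((m:ℝ) * ∑ i, (Z z i - Z z' i) ^ 2) := by
            refine mul_le_mul_of_nonneg_left ?_ (pow_nonneg hκ0.le _)
            have h := sq_sum_le_card_mul_sum_sq (s := (Finset.univ : Finset (Fin m)))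
              (f := fun i => |Z z i - Z z' i|)
            simpa [sq_abs] using h
    calc (1/2) * ∑ z, ∑ z', P s z * P s z' * ∑ i, (EZ P Z t z i - EZ P Z t z' i) ^ 2
        ≤ (1/2) * ∑ z, ∑ z', P s z * P s z' * (κ ^ (2*t) * ((m:ℝ) * ∑ i, (Z z i - Z z' i) ^ 2)) := by
          refine mul_le_mul_of_nonneg_left ?_ (by norm_num)
          refine Finset.sum_le_sum fun z _ => Finset.sum_le_sum fun z' _ => ?_
          exact mul_le_mul_of_nonneg_left (hpt z z') (mul_nonneg (hP0 s z) (hP0 s z'))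
      _ = (m:ℝ) * κ ^ (2*t) * VarZ P Z 1 s := by
          rw [hVar1 s]
          have hc : ∀ z z' : S,
              P s z * P s z' * (κ ^ (2*t) * ((m:ℝ) * ∑ i, (Z z i - Z z' i) ^ 2))
                = ((m:ℝ) * κ ^ (2*t)) * (P s z * P s z' * ∑ i, (Z z i - Z z' i) ^ 2) :=
            fun z z' => by ring
          simp only [hc, ← Finset.mul_sum]
          ring
      _ ≤ (m:ℝ) * κ ^ (2*t) * v 1 := by
          refine mul_le_mul_of_nonneg_left (hle 1 s) ?_
          positivity
  -- sup recursion
  have hrec : ∀ t : ℕ, v (t+1) ≤ v t + (m:ℝ) * κ ^ (2*t) * v 1 := by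
    intro t
    refine ciSup_le fun s => ?_
    rw [hdec t s]
    have hA : ∑ z, P s z * VarZ P Z t z ≤ v t := by
      calc ∑ z, P s z * VarZ P Z t z ≤ ∑ z, P s z * v t :=
            Finset.sum_le_sum fun z _ => mul_le_mul_of_nonneg_left (hle t z) (hP0 s z)
        _ = v t := by rw [← Finset.sum_mul, hP1 s, one_mul]
    exact add_le_add hA (hW t s)
  have hv0 : v 0 = 0 := by
    have hz : ∀ s : S, VarZ P Z 0 s = 0 := by
      intro s
      unfold VarZ EZ
      simp [iter]
    simp only [hv, hz, ciSup_const]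
  have hmain : ∀ t : ℕ, v t ≤ (m:ℝ) * v 1 * ∑ j ∈ Finset.range t, (κ^2)^j := by
    intro t
    induction t with
    | zero => simp [hv0]
    | succ t ih =>
        calc v (t+1) ≤ v t + (m:ℝ) * κ ^ (2*t) * v 1 := hrec t
          _ ≤ (m:ℝ) * v 1 * ∑ j ∈ Finset.range t, (κ^2)^j + (m:ℝ) * κ ^ (2*t) * v 1 := by
              linarith
          _ = (m:ℝ) * v 1 * ∑ j ∈ Finset.range (t+1), (κ^2)^j := by
              rw [Finset.sum_range_succ, ← pow_mul]
              ring
  intro t ht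
  have hκ2 : κ^2 < 1 := by nlinarith
  have hsum_le : ∑ j ∈ Finset.range t, (κ^2)^j ≤ min (t:ℝ) ((1-κ^2)⁻¹) := by
    refine le_min ?_ ?_
    · calc ∑ j ∈ Finset.range t, (κ^2)^j ≤ ∑ _j ∈ Finset.range t, (1:ℝ) :=
            Finset.sum_le_sum fun j _ => pow_le_one₀ (sq_nonneg κ) hκ2.le
        _ = t := by simp
    · have h1 : (0:ℝ) < 1 - κ^2 := by linarith
      rw [geom_sum_eq hκ2.ne t]
      have heq : ((κ^2)^t - 1)/(κ^2 - 1) = (1 - (κ^2)^t)/(1-κ^2) := by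
        rw [div_eq_div_iff (by linarith) (by linarith)]
        ring
      rw [heq, inv_eq_one_div]
      have hnum : 1 - (κ^2)^t ≤ 1 := by
        have : (0:ℝ) ≤ (κ^2)^t := pow_nonneg (sq_nonneg κ) t
        linarith
      gcongr
  calc v t ≤ (m:ℝ) * v 1 * ∑ j ∈ Finset.range t, (κ^2)^j := hmain t
    _ ≤ (m:ℝ) * v 1 * min (t:ℝ) ((1-κ^2)⁻¹) := by
        refine mul_le_mul_of_nonneg_left hsum_le ?_
        exact mul_nonneg (Nat.cast_nonneg m) (hvnn 1)


end MultiIsing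
end
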